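/- arXiv:2312.15426 — 3 statements merged into one kernel-verified Lean document; each statement's English description precedes it below -/
import Mathlib

section
/- For every group access tree T over [n] there exists a leaf-oriented binary search tree R over [n] (obtained from T by replacing, at each internal group g, the edges to its children by an arbitrary binary search tree with leaves CG(g)) such that for every access sequence X = (x_1,…,x_m) ∈ [n]^m and every choice of initial preferred children of R, Σ_{t=1}^{m} γ_t ≤ Wilber1_R(X), where γ_t is the number of groups g on the search path T(x_t) whose parent lay on some earlier search path and for which g is not the last-accessed child of its parent at time t. -/
open scoped Classical

/-- A *group access tree* over `[n]` (keys modeled as `Fin n`): a hierarchical interval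
partition of the key space.  `grp i a` is the level-`i` group containing the key `a`. -/
structure GAT (n : ℕ) where
  depth : ℕ
  grp : ℕ → Fin n → Finset (Fin n)
  mem_grp : ∀ i a, a ∈ grp i a
  grp_root : ∀ a, grp 0 a = Finset.univ
  grp_leaf : ∀ i a, depth ≤ i → grp i a = {a}
  grp_eq : ∀ i a b, b ∈ grp i a → grp i b = grp i a
  grp_subset : ∀ i a, grp (i + 1) a ⊆ grp i a
  grp_interval : ∀ i a, ∃ lo hi : Fin n, grp i a = Finset.Icc lo hi

/-- The set of children (level-`(j+1)` groups) of the level-`j` group containing `a`. -/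
def GAT.children {n : ℕ} (T : GAT n) (j : ℕ) (a : Fin n) : Finset (Finset (Fin n)) :=
  (T.grp j a).image (fun b => T.grp (j + 1) b)

/-- The access cost of key `a` in the group access tree `T` with respect to a weight
function `w` (indexed by level and group):
`c(T,w,a) = ∑_{j=1}^{depth} log₂ (W^j / w(g_j(a)))`. -/
noncomputable def GAT.accessCost {n : ℕ} (T : GAT n) (w : ℕ → Finset (Fin n) → ℝ)
    (a : Fin n) : ℝ :=
  ∑ j ∈ Finset.range T.depth,
    Real.logb 2 (((T.children j a).sum (fun g => w (j + 1) g)) / w (j + 1) (T.grp (j + 1) a))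

/-- A family of weight functions (one per time step, indexed by level and group) is
*locally bounded* if the weight of a group may increase from time `t` to `t+1` only if the
group lies on the search path of `x t`. -/
def LocallyBounded {n m : ℕ} (T : GAT n) (x : Fin m → Fin n)
    (w : ℕ → ℕ → Finset (Fin n) → ℝ) : Prop :=
  ∀ (t : Fin m) (j : ℕ) (b : Fin n), T.grp j b ≠ T.grp j (x t) →
    w ((t : ℕ) + 1) j (T.grp j b) ≤ w (t : ℕ) j (T.grp j b)

/-- The group access bound `GAB(T, X)`: the infimum, over all locally bounded families of
positive weight functions, of the total access cost of the sequence `x`. -/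
noncomputable def GAB {n m : ℕ} (T : GAT n) (x : Fin m → Fin n) : ℝ :=
  sInf { c : ℝ | ∃ w : ℕ → ℕ → Finset (Fin n) → ℝ,
    (∀ t j g, 0 < w t j g) ∧ LocallyBounded T x w ∧
    c = ∑ t : Fin m, T.accessCost (w (t : ℕ)) (x t) }

/-- A leaf-oriented binary search tree over the keys `0, …, n-1`: every node is an interval
`[lo, hi]` of keys, and every internal node `[lo, hi]` (with `lo < hi`) is split into the two
children `[lo, split lo hi]` and `[split lo hi + 1, hi]`. -/
structure LeafBST (n : ℕ) where
  split : ℕ → ℕ → ℕ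
  le_split : ∀ lo hi, lo ≤ split lo hi
  split_lt : ∀ lo hi, lo < hi → split lo hi < hi

/-- The intervals `[lo, hi]` that occur as nodes of the leaf-oriented BST `R`. -/
inductive LeafBST.IsNode {n : ℕ} (R : LeafBST n) : ℕ → ℕ → Prop where
  | root : R.IsNode 0 (n - 1)
  | left {lo hi : ℕ} : R.IsNode lo hi → lo < hi → R.IsNode lo (R.split lo hi)
  | right {lo hi : ℕ} : R.IsNode lo hi → lo < hi → R.IsNode (R.split lo hi + 1) hi

/-- The preferred child of the node `[lo, hi]` of `R` after the first `c` accesses of `x`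
(`true` = left child): it is determined by the most recent access in `[lo, hi]`, and by the
arbitrary initial preference `init lo hi` if there was none. -/
noncomputable def LeafBST.pref {n m : ℕ} (R : LeafBST n) (init : ℕ → ℕ → Bool)
    (x : Fin m → Fin n) (lo hi c : ℕ) : Bool :=
  if h : (Finset.univ.filter (fun t' : Fin m =>
      (t' : ℕ) < c ∧ lo ≤ (x t' : ℕ) ∧ (x t' : ℕ) ≤ hi)).Nonempty then
    decide ((x ((Finset.univ.filter (fun t' : Fin m =>
      (t' : ℕ) < c ∧ lo ≤ (x t' : ℕ) ∧ (x t' : ℕ) ≤ hi)).max' h) : ℕ) ≤ R.split lo hi)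
  else init lo hi

/-- The first Wilber bound of the sequence `x` with respect to the reference tree `R` and the
initial preferred children `init`: the total number of preferred-child changes. -/
noncomputable def wilber1 {n m : ℕ} (R : LeafBST n) (init : ℕ → ℕ → Bool)
    (x : Fin m → Fin n) : ℕ :=
  ∑ t : Fin m,
    ((Finset.range n ×ˢ Finset.range n).filter (fun v : ℕ × ℕ =>
      R.IsNode v.1 v.2 ∧ v.1 < v.2 ∧
      R.pref init x v.1 v.2 ((t : ℕ) + 1) ≠ R.pref init x v.1 v.2 (t : ℕ))).card

/-- `γ_t`: the number of groups on the search path of `x t` in `T` whose parent lay on some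
earlier search path and which are not the last-accessed child of their parent at time `t`
(one candidate group per level `j ∈ {1, …, depth}`). -/
noncomputable def gammaT {n m : ℕ} (T : GAT n) (x : Fin m → Fin n) (t : Fin m) : ℕ :=
  ((Finset.Icc 1 T.depth).filter (fun j =>
    (∃ t' : Fin m, t' < t ∧ T.grp (j - 1) (x t') = T.grp (j - 1) (x t)) ∧
    ¬ (∃ t' : Fin m, t' < t ∧ T.grp j (x t') = T.grp j (x t) ∧
        ∀ t'' : Fin m, t' < t'' → t'' < t →
          T.grp (j - 1) (x t'') ≠ T.grp (j - 1) (x t')))).card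

/-!
Build `R` top-down, splitting each node `[lo, hi]` between two keys `s, s + 1` that are
separated at the coarsest possible level of `T`. Then a node of `R` whose two halves meet
children `g₁ ≠ g₂` of a group `g` lies entirely inside `g`, and its split key is separated exactly
at the level of `g₁, g₂`. If the group `g_j(x_t)` counted in `γ_t` is not the last-accessed child
of its parent `g`, the previous access `x_{t'}` to `g` went to another child; the node of `R` where
the search paths of `x_t` and `x_{t'}` diverge lies inside `g`, so `t'` was its last access before
`t`, and its preferred child flips at time `t`. The level of its split key recovers `j`, so
distinct counted levels give distinct flipping nodes.
-/

namespace GAT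

variable {n : ℕ} (T : GAT n)

theorem grp_subset_of_le {i j : ℕ} (h : i ≤ j) (a : Fin n) : T.grp j a ⊆ T.grp i a := by
  induction j, h using Nat.le_induction with
  | base => exact subset_rfl
  | succ j _ ih => exact (T.grp_subset j a).trans ih

theorem grp_eq_of_le {i j : ℕ} (h : i ≤ j) {a b : Fin n} (hab : T.grp j a = T.grp j b) :
    T.grp i a = T.grp i b :=
  (T.grp_eq i a b (T.grp_subset_of_le h a (hab ▸ T.mem_grp j b))).symm

theorem grp_eq_of_le_of_le {j : ℕ} {a b c : Fin n} (hab : T.grp j a = T.grp j b)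
    (hac : a ≤ c) (hcb : c ≤ b) : T.grp j c = T.grp j a := by
  obtain ⟨lo, hi, hIcc⟩ := T.grp_interval j a
  have ha := T.mem_grp j a
  have hb : b ∈ T.grp j a := hab ▸ T.mem_grp j b
  rw [hIcc, Finset.mem_Icc] at ha hb
  exact T.grp_eq j a c (hIcc ▸ Finset.mem_Icc.2 ⟨ha.1.trans hac, hcb.trans hb.2⟩)

theorem exists_grp_ne {s : ℕ} (h : s + 1 < n) :
    ∃ l, T.grp l ⟨s, by omega⟩ ≠ T.grp l ⟨s + 1, h⟩ :=
  ⟨T.depth, by simp [T.grp_leaf _ _ le_rfl, Fin.ext_iff]⟩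

/-- The first level at which the keys `s` and `s + 1` lie in different groups
(junk value `0` unless `s + 1 < n`). -/
noncomputable def sepLevel (s : ℕ) : ℕ :=
  if h : s + 1 < n then Nat.find (T.exists_grp_ne h) else 0

theorem lt_sepLevel_iff {s : ℕ} (h : s + 1 < n) {l : ℕ} :
    l < T.sepLevel s ↔ T.grp l ⟨s, by omega⟩ = T.grp l ⟨s + 1, h⟩ := by
  rw [sepLevel, dif_pos h, Nat.lt_find_iff]
  simp only [not_not]
  exact ⟨fun H => H l le_rfl, fun H m hm => T.grp_eq_of_le hm H⟩

theorem grp_eq_of_lt_sepLevel {l lo hi : ℕ} (H : ∀ s, lo ≤ s → s < hi → l < T.sepLevel s)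
    {c c' : Fin n} (hc : lo ≤ c) (hc_hi : c ≤ hi) (hc' : lo ≤ c') (hc'_hi : c' ≤ hi) :
    T.grp l c = T.grp l c' := by
  have hlo : lo < n := by omega
  suffices key : ∀ k (hk : k < n), lo ≤ k → k ≤ hi → T.grp l ⟨k, hk⟩ = T.grp l ⟨lo, hlo⟩ from
    (key c c.isLt hc hc_hi).trans (key c' c'.isLt hc' hc'_hi).symm
  intro k
  induction k with
  | zero => intro _ h _; simp only [show lo = 0 by omega]
  | succ k ih =>
    intro hk h1 h2
    rcases Nat.eq_or_lt_of_le h1 with rfl | h1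
    · rfl
    · rw [← ih (by omega) (by omega) (by omega)]
      exact ((T.lt_sepLevel_iff hk).1 (H k (by omega) (by omega))).symm

noncomputable def splitAt (lo hi : ℕ) : ℕ :=
  if h : lo < hi then
    ((Finset.Ico lo hi).exists_min_image T.sepLevel (Finset.nonempty_Ico.2 h)).choose
  else lo

theorem splitAt_spec {lo hi : ℕ} (h : lo < hi) :
    T.splitAt lo hi ∈ Finset.Ico lo hi ∧
      ∀ s ∈ Finset.Ico lo hi, T.sepLevel (T.splitAt lo hi) ≤ T.sepLevel s := by
  rw [splitAt, dif_pos h]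
  exact (Finset.exists_min_image _ _ (Finset.nonempty_Ico.2 h)).choose_spec

theorem sepLevel_splitAt {l lo hi : ℕ} {a b : Fin n} (hlo : lo ≤ a) (ha : a ≤ T.splitAt lo hi)
    (hb : T.splitAt lo hi < b) (hhi : b ≤ hi) (hl : T.grp l a = T.grp l b)
    (hl' : T.grp (l + 1) a ≠ T.grp (l + 1) b) :
    T.sepLevel (T.splitAt lo hi) = l + 1 ∧
      ∀ c : Fin n, lo ≤ c → c ≤ hi → T.grp l c = T.grp l a := by
  obtain ⟨hs, hmin⟩ := T.splitAt_spec (lo := lo) (hi := hi) (by omega)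
  set s := T.splitAt lo hi
  have hsn : s + 1 < n := by omega
  have grp_eq_of_lt {k : ℕ} (hk : k < T.sepLevel s) {c c' : Fin n} (hc : lo ≤ c) (hc_hi : c ≤ hi)
      (hc' : lo ≤ c') (hc'_hi : c' ≤ hi) : T.grp k c = T.grp k c' :=
    T.grp_eq_of_lt_sepLevel (fun s' h1 h2 => hk.trans_le (hmin s' (Finset.mem_Ico.2 ⟨h1, h2⟩)))
      hc hc_hi hc' hc'_hi
  have hl_lt : l < T.sepLevel s := by
    rw [T.lt_sepLevel_iff hsn,
      T.grp_eq_of_le_of_le (c := ⟨s, by omega⟩) hl (Fin.le_iff_val_le_val.2 ha)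
        (Fin.le_iff_val_le_val.2 hb.le),
      T.grp_eq_of_le_of_le (c := ⟨s + 1, hsn⟩) hl (Fin.le_iff_val_le_val.2 (Nat.le_succ_of_le ha))
        (Fin.le_iff_val_le_val.2 hb)]
  refine ⟨le_antisymm (not_lt.1 fun h => hl' (grp_eq_of_lt h hlo (by omega) (by omega) hhi)) hl_lt,
    fun c hc hc_hi => grp_eq_of_lt hl_lt hc hc_hi hlo (by omega)⟩

noncomputable def toLeafBST : LeafBST n where
  split := T.splitAt
  le_split lo hi := by
    by_cases h : lo < hi
    · exact (Finset.mem_Ico.1 (T.splitAt_spec h).1).1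
    · rw [splitAt, dif_neg h]
  split_lt _ _ h := (Finset.mem_Ico.1 (T.splitAt_spec h).1).2

theorem toLeafBST_split : T.toLeafBST.split = T.splitAt := rfl

end GAT

namespace LeafBST

variable {n : ℕ} (R : LeafBST n)

theorem IsNode.hi_le {lo hi : ℕ} (h : R.IsNode lo hi) : hi ≤ n - 1 := by
  induction h with
  | root => exact le_rfl
  | left _ hlt ih => exact (R.split_lt _ _ hlt).le.trans ih
  | right _ _ ih => exact ih

theorem exists_isNode_separating {a b : ℕ} (hab : a < b) (hb : b < n) :
    ∃ lo hi, R.IsNode lo hi ∧ lo ≤ a ∧ a ≤ R.split lo hi ∧ R.split lo hi < b ∧ b ≤ hi := by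
  suffices descend : ∀ d lo hi, hi - lo ≤ d → R.IsNode lo hi → lo ≤ a → b ≤ hi →
      ∃ lo hi, R.IsNode lo hi ∧ lo ≤ a ∧ a ≤ R.split lo hi ∧ R.split lo hi < b ∧ b ≤ hi from
    descend _ 0 (n - 1) le_rfl .root a.zero_le (by omega)
  intro d
  induction d with
  | zero => intro lo hi hd _ _ _; omega
  | succ d ih =>
    intro lo hi hd hnode hlo hhi
    have hlo_split := R.le_split lo hi
    have hsplit_hi := R.split_lt lo hi (by omega)
    by_cases ha : a ≤ R.split lo hi
    · by_cases hb : b ≤ R.split lo hi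
      · exact ih lo _ (by omega) (hnode.left (by omega)) hlo hb
      · exact ⟨lo, hi, hnode, hlo, ha, by omega, hhi⟩
    · exact ih _ hi (by omega) (hnode.right (by omega)) (by omega) hhi

theorem pref_eq_of_lastAccess {m : ℕ} (init : ℕ → ℕ → Bool) (x : Fin m → Fin n)
    {lo hi c : ℕ} {t : Fin m} (ht : (t : ℕ) < c) (hlo : lo ≤ x t) (hhi : x t ≤ hi)
    (hlast : ∀ t' : Fin m, (t' : ℕ) < c → lo ≤ x t' → x t' ≤ hi → t' ≤ t) :
    R.pref init x lo hi c = decide (x t ≤ R.split lo hi) := by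
  have hmem : t ∈ Finset.univ.filter
      (fun t' : Fin m => (t' : ℕ) < c ∧ lo ≤ (x t' : ℕ) ∧ (x t' : ℕ) ≤ hi) := by
    simp [ht, hlo, hhi]
  rw [pref, dif_pos ⟨t, hmem⟩]
  congr
  refine le_antisymm (Finset.max'_le _ _ _ fun t' ht' => ?_) (Finset.le_max' _ t hmem)
  simp only [Finset.mem_filter, Finset.mem_univ, true_and] at ht'
  exact hlast t' ht'.1 ht'.2.1 ht'.2.2

noncomputable def prefChanges {m : ℕ} (init : ℕ → ℕ → Bool)
    (x : Fin m → Fin n) (t : Fin m) : Finset (ℕ × ℕ) :=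
  (Finset.range n ×ˢ Finset.range n).filter (fun v : ℕ × ℕ =>
    R.IsNode v.1 v.2 ∧ v.1 < v.2 ∧
    R.pref init x v.1 v.2 ((t : ℕ) + 1) ≠ R.pref init x v.1 v.2 (t : ℕ))

end LeafBST

namespace GAT

variable {n : ℕ} (T : GAT n)

theorem exists_isNode_separating_grp {l : ℕ} {a b : Fin n}
    (hl : T.grp l a = T.grp l b) (hl' : T.grp (l + 1) a ≠ T.grp (l + 1) b) :
    ∃ lo hi, T.toLeafBST.IsNode lo hi ∧ lo ≤ a ∧ a ≤ hi ∧ lo ≤ b ∧ b ≤ hi ∧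
      (a ≤ T.splitAt lo hi ↔ T.splitAt lo hi < b) ∧ T.sepLevel (T.splitAt lo hi) = l + 1 ∧
      ∀ c : Fin n, lo ≤ c → c ≤ hi → T.grp l c = T.grp l a := by
  have hab : a ≠ b := fun h => hl' (h ▸ rfl)
  wlog hlt : a < b generalizing a b
  · obtain ⟨lo, hi, hnode, ha, ha', hb, hb', hsplit, hlev, hconst⟩ :=
      this hl.symm (Ne.symm hl') hab.symm (lt_of_le_of_ne (not_lt.1 hlt) hab.symm)
    exact ⟨lo, hi, hnode, hb, hb', ha, ha', by omega, hlev,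
      fun c hc hc' => (hconst c hc hc').trans hl.symm⟩
  obtain ⟨lo, hi, hnode, ha, hsplit, hsplit', hb⟩ :=
    T.toLeafBST.exists_isNode_separating (Fin.lt_def.1 hlt) b.isLt
  rw [T.toLeafBST_split] at hsplit hsplit'
  obtain ⟨hlev, hconst⟩ := T.sepLevel_splitAt ha hsplit hsplit' hb hl hl'
  exact ⟨lo, hi, hnode, ha, by omega, by omega, hb, by omega, hlev, hconst⟩

noncomputable def gammaLevels {m : ℕ} (x : Fin m → Fin n) (t : Fin m) :
    Finset ℕ :=
  (Finset.Icc 1 T.depth).filter (fun j =>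
    (∃ t' : Fin m, t' < t ∧ T.grp (j - 1) (x t') = T.grp (j - 1) (x t)) ∧
    ¬ (∃ t' : Fin m, t' < t ∧ T.grp j (x t') = T.grp j (x t) ∧
        ∀ t'' : Fin m, t' < t'' → t'' < t →
          T.grp (j - 1) (x t'') ≠ T.grp (j - 1) (x t')))

theorem gammaLevels_subset_image_prefChanges {m : ℕ} (x : Fin m → Fin n)
    (init : ℕ → ℕ → Bool) (t : Fin m) :
    T.gammaLevels x t ⊆ (T.toLeafBST.prefChanges init x t).image
      (fun v => T.sepLevel (T.splitAt v.1 v.2)) := by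
  intro j hj
  simp only [gammaLevels, Finset.mem_filter, Finset.mem_Icc] at hj
  obtain ⟨⟨hj, -⟩, hvisited, hnot_last⟩ := hj
  obtain ⟨l, rfl⟩ : ∃ l, j = l + 1 := ⟨j - 1, by omega⟩
  simp only [Nat.add_sub_cancel] at hvisited hnot_last
  obtain ⟨t', ht', hlast⟩ := (Finset.univ.filter fun t' : Fin m =>
      t' < t ∧ T.grp l (x t') = T.grp l (x t)).exists_max_image id
    (by simpa [Finset.Nonempty] using hvisited)
  simp only [Finset.mem_filter, Finset.mem_univ, true_and, id] at ht' hlast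
  have hne : T.grp (l + 1) (x t) ≠ T.grp (l + 1) (x t') := fun h =>
    hnot_last ⟨t', ht'.1, h.symm, fun t'' h1 h2 h3 =>
      (hlast t'' ⟨h2, h3.trans ht'.2⟩).not_gt h1⟩
  obtain ⟨lo, hi, hnode, ha, ha', hb, hb', hsplit, hlev, hconst⟩ :=
    T.exists_isNode_separating_grp ht'.2.symm hne
  have hhi := hnode.hi_le
  have hpref_succ : T.toLeafBST.pref init x lo hi (t + 1) = decide (x t ≤ T.splitAt lo hi) :=
    T.toLeafBST.pref_eq_of_lastAccess init x (Nat.lt_succ_self t) ha ha'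
      fun t'' h _ _ => Fin.le_iff_val_le_val.2 (Nat.le_of_lt_succ h)
  have hpref : T.toLeafBST.pref init x lo hi t = decide (x t' ≤ T.splitAt lo hi) :=
    T.toLeafBST.pref_eq_of_lastAccess init x ht'.1 hb hb'
      fun t'' h h1 h2 => hlast t'' ⟨h, hconst _ h1 h2⟩
  refine Finset.mem_image.2 ⟨(lo, hi), ?_, hlev⟩
  simp only [LeafBST.prefChanges, Finset.mem_filter, Finset.mem_product, Finset.mem_range]
  refine ⟨⟨by omega, by omega⟩, hnode, by omega, ?_⟩
  rw [hpref_succ, hpref]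
  simp only [ne_eq, decide_eq_decide]
  omega

end GAT

theorem stmt9_general (n : ℕ) (T : GAT n) :
    ∃ R : LeafBST n, ∀ (m : ℕ) (x : Fin m → Fin n) (init : ℕ → ℕ → Bool),
      (∑ t : Fin m, gammaT T x t) ≤ wilber1 R init x := by
  refine ⟨T.toLeafBST, fun m x init => Finset.sum_le_sum fun t _ => ?_⟩
  calc gammaT T x t = (T.gammaLevels x t).card := rfl
    _ ≤ ((T.toLeafBST.prefChanges init x t).image _).card :=
      Finset.card_le_card (T.gammaLevels_subset_image_prefChanges x init t)
    _ ≤ (T.toLeafBST.prefChanges init x t).card := Finset.card_image_le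

/-- For every group access tree `T` over `[n]` there exists a leaf-oriented
binary search tree `R` over `[n]` such that for every access sequence `X ∈ [n]^m` and every
choice of initial preferred children of `R`, `∑_t γ_t ≤ Wilber1_R(X)`. -/
theorem stmt9 (n : ℕ) (hn : 1 ≤ n) (T : GAT n) :
    ∃ R : LeafBST n, ∀ (m : ℕ) (x : Fin m → Fin n) (init : ℕ → ℕ → Bool),
      (∑ t : Fin m, gammaT T x t) ≤ wilber1 R init x :=
  stmt9_general n T
end

section
/- There are universal constants c, C ≥ 1 such that the following holds for the randomized group access tree over [n]. Let X = (x_1,…,x_m) ∈ [n]^m, fix a time t ≥ 2 and a window size k ≥ 1, let UB^k(t) = min_{max(1,t−k) ≤ t' ≤ t−1} (t − t' + |x_t − x_{t'}| + 2), and let ub^k(t) = x_{t'} for a minimizing t'. If j is the largest integer with UB^k(t) ≤ c·n^{1/2^j} / log₂(n^{1/2^j}), then for every i ∈ {0, 1, …, j}, the probability (over the random shifts used to sample the tree) that x_t and ub^k(t) lie in different level-i groups is at most C / log₂(n^{1/2^i}). -/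
/-!
Two keys `y < z` in a common level-`l` group with left end `a` are separated at level `l + 1`
only if a block boundary `a + s + q L` of the split (`L = 2^{ℓ_{l+1}}`) lands in `(y, z]`. The
boundaries form one residue class mod `L` and the shift `s` is uniform on `L` consecutive values,
so this has probability at most `(z - y) / L`. The block sizes at least halve from one level to
the next, so a union bound over the levels gives `P[g_i(y) ≠ g_i(z)] ≤ 2 (z - y) / 2^{ℓ_i}`.

Take `c = 1`. Maximality of `j` forces `log₂ n^{1/2^j} > 2`, and since `b ↦ 2^b / b` does not
decrease under doubling `b ≥ 1`, for `i ≤ j`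
`z - y ≤ UB^k(t) ≤ n^{1/2^j} / log₂ n^{1/2^j} ≤ n^{1/2^i} / log₂ n^{1/2^i}
  ≤ 2 · 2^{ℓ_i} / log₂ n^{1/2^i}`,
which gives the bound with `C = 4`.
-/

/-- The block size at level `j` of the randomized group access tree over `[n]`:
`2^{ℓ_j}` with `ℓ_j = (log₂ n)/2^j`. -/
def Lsz (n j : ℕ) : ℕ := 2 ^ (Nat.log 2 n / 2 ^ j)

/-- The random seed of the randomized group access tree over `[n]`: for every level
`j < log₂ n` and every possible left endpoint `a ≤ n` of a level-`j` group, the shift used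
to split that group into its level-`(j+1)` children. -/
abbrev Seed (n : ℕ) := Fin (Nat.log 2 n) → Fin (n + 1) → Fin (n + 1)

/-- The finite sample space of the randomized group access tree: all seeds whose shift for a
level-`j` group lies in `{1, …, 2^{ℓ_{j+1}}}`; the tree is sampled by choosing each shift
uniformly and independently, i.e. uniformly from this product set. -/
def seedSpace (n : ℕ) : Finset (Seed n) :=
  Finset.univ.filter (fun σ => ∀ (j : Fin (Nat.log 2 n)) (a : Fin (n + 1)),
    1 ≤ (σ j a : ℕ) ∧ (σ j a : ℕ) ≤ Lsz n ((j : ℕ) + 1))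

/-- The left endpoint of the level-`i` group containing the key `y ∈ {1, …, n}` in the
randomized group access tree with seed `σ`: the root group is `(1, …, n)`, and a level-`i`
group with left endpoint `a` and shift `s = σ i a` is partitioned into the intervals
`(a, …, a+s-1), (a+s, …, a+s+L-1), …` of size `L = Lsz n (i+1)` (except possibly the first
and the last).  Two keys lie in the same level-`i` group iff their level-`i` left endpoints
agree. -/
def leftEnd (n : ℕ) (σ : Seed n) : ℕ → ℕ → ℕ
  | 0, _ => 1
  | i + 1, y =>
    let a := leftEnd n σ i y
    if h : i < Nat.log 2 n then
      let s : ℕ := (σ ⟨i, h⟩ (if ha : a < n + 1 then ⟨a, ha⟩ else 0) : ℕ)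
      if y < a + s then a
      else a + s + Lsz n (i + 1) * ((y - (a + s)) / Lsz n (i + 1))
    else a

/-- The minimized quantity in the unified bound with time window `k` at time `t` (0-indexed):
`min_{t' < t, t - t' ≤ k} (t - t' + |x_t - x_{t'}| + 2)`. -/
noncomputable def ubkNat {m : ℕ} (k : ℕ) (x : Fin m → ℕ) (t : Fin m) : ℕ :=
  sInf { v : ℕ | ∃ t' : Fin m, t' < t ∧ (t : ℕ) ≤ (t' : ℕ) + k ∧
    v = ((t : ℕ) - (t' : ℕ)) + (max (x t) (x t') - min (x t) (x t')) + 2 }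

lemma Lsz_pos (n j : ℕ) : 0 < Lsz n j := Nat.two_pow_pos _

lemma two_mul_Lsz_succ_le {n j : ℕ} (h : 1 ≤ Nat.log 2 n / 2 ^ (j + 1)) :
    2 * Lsz n (j + 1) ≤ Lsz n j := by
  have hdiv : Nat.log 2 n / 2 ^ (j + 1) = Nat.log 2 n / 2 ^ j / 2 := by
    rw [Nat.div_div_eq_div_mul, pow_succ]
  rw [Lsz, Lsz, ← pow_succ']
  exact Nat.pow_le_pow_right two_pos (by omega)

/-- Left end of the child group of `y` when the group starting at `a` is split with shift `s`
into blocks of size `L`, as in `leftEnd`. -/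
def splitLeft (a s L y : ℕ) : ℕ :=
  if y < a + s then a else a + s + L * ((y - (a + s)) / L)

lemma splitLeft_of_ne {a s L y z : ℕ} (hL : 0 < L) (hyz : y ≤ z)
    (hne : splitLeft a s L y ≠ splitLeft a s L z) :
    y < splitLeft a s L z ∧ splitLeft a s L z ≤ z ∧ splitLeft a s L z % L = (a + s) % L := by
  unfold splitLeft at hne ⊢
  have hz : ¬ z < a + s := fun hz => hne (by rw [if_pos (by omega), if_pos hz])
  rw [if_neg hz] at hne ⊢
  refine ⟨?_, ?_, Nat.add_mul_mod_self_left _ _ _⟩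
  · by_cases hy : y < a + s
    · exact lt_of_lt_of_le hy (Nat.le_add_right _ _)
    · rw [if_neg hy] at hne
      have hq : (y - (a + s)) / L < (z - (a + s)) / L :=
        lt_of_le_of_ne (Nat.div_le_div_right (by omega)) fun h => hne (by rw [h])
      have h₁ := Nat.lt_mul_div_succ (y - (a + s)) hL
      have h₂ := Nat.mul_le_mul_left L (Nat.succ_le_of_lt hq)
      rw [Nat.succ_eq_add_one] at h₂
      omega
  · have := Nat.mul_div_le (z - (a + s)) L
    omega

/-- The level-`l` left end of `y` as an index into `σ ⟨l, _⟩`, as `leftEnd` reads it. -/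
def leftEndFin (n : ℕ) (σ : Seed n) (l y : ℕ) : Fin (n + 1) :=
  if ha : leftEnd n σ l y < n + 1 then ⟨leftEnd n σ l y, ha⟩ else 0

lemma leftEndFin_congr {n : ℕ} {σ τ : Seed n} {l y z : ℕ}
    (h : leftEnd n σ l y = leftEnd n τ l z) : leftEndFin n σ l y = leftEndFin n τ l z := by
  simp only [leftEndFin, h]

lemma leftEnd_succ_of_lt {n : ℕ} (σ : Seed n) {l : ℕ} (hl : l < Nat.log 2 n) (y : ℕ) :
    leftEnd n σ (l + 1) y =
      splitLeft (leftEnd n σ l y) (σ ⟨l, hl⟩ (leftEndFin n σ l y)) (Lsz n (l + 1)) y := by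
  rw [leftEnd, dif_pos hl]
  rfl

lemma leftEnd_succ_of_le {n : ℕ} (σ : Seed n) {l : ℕ} (hl : Nat.log 2 n ≤ l) (y : ℕ) :
    leftEnd n σ (l + 1) y = leftEnd n σ l y := by
  rw [leftEnd, dif_neg (not_lt.mpr hl)]

lemma leftEnd_congr {n : ℕ} {σ τ : Seed n} {l : ℕ}
    (h : ∀ j : Fin (Nat.log 2 n), (j : ℕ) < l → σ j = τ j) (y : ℕ) :
    leftEnd n σ l y = leftEnd n τ l y := by
  induction l with
  | zero => rfl
  | succ l ih =>
    rw [leftEnd, leftEnd, ih fun j hj => h j (Nat.lt_succ_of_lt hj)]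
    split
    · next hl => rw [h ⟨l, hl⟩ (Nat.lt_succ_self l)]
    · rfl

def separating (n i y z : ℕ) : Finset (Seed n) :=
  (seedSpace n).filter fun σ => leftEnd n σ i y ≠ leftEnd n σ i z

def firstSeparating (n l y z : ℕ) : Finset (Seed n) :=
  (seedSpace n).filter fun σ =>
    leftEnd n σ l y = leftEnd n σ l z ∧ leftEnd n σ (l + 1) y ≠ leftEnd n σ (l + 1) z

lemma card_separating_le_sum (n i y z : ℕ) :
    (separating n i y z).card ≤ ∑ l ∈ Finset.range i, (firstSeparating n l y z).card := by
  induction i with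
  | zero => simp [separating, leftEnd]
  | succ i ih =>
    have hsub : separating n (i + 1) y z ⊆ separating n i y z ∪ firstSeparating n i y z := by
      intro σ hσ
      simp only [separating, firstSeparating, Finset.mem_union, Finset.mem_filter] at hσ ⊢
      tauto
    rw [Finset.sum_range_succ]
    exact (Finset.card_le_card hsub).trans ((Finset.card_union_le _ _).trans (by omega))

lemma leftEnd_succ_of_mem_firstSeparating {n l y z : ℕ} {σ : Seed n} (hl : l < Nat.log 2 n)
    (hyz : y ≤ z) (hσ : σ ∈ firstSeparating n l y z) :
    y < leftEnd n σ (l + 1) z ∧ leftEnd n σ (l + 1) z ≤ z ∧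
      leftEnd n σ (l + 1) z % Lsz n (l + 1) =
        (leftEnd n σ l y + σ ⟨l, hl⟩ (leftEndFin n σ l y)) % Lsz n (l + 1) := by
  obtain ⟨-, hsame, hne⟩ := Finset.mem_filter.mp hσ
  have hz : leftEnd n σ (l + 1) z =
      splitLeft (leftEnd n σ l y) (σ ⟨l, hl⟩ (leftEndFin n σ l y)) (Lsz n (l + 1)) z := by
    rw [leftEnd_succ_of_lt σ hl, hsame, leftEndFin_congr hsame]
  rw [hz]
  rw [leftEnd_succ_of_lt σ hl, hz] at hne
  exact splitLeft_of_ne (Lsz_pos _ _) hyz hne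

def reseed {n : ℕ} (σ : Seed n) (j : Fin (Nat.log 2 n)) (a v : Fin (n + 1)) : Seed n :=
  Function.update σ j (Function.update (σ j) a v)

@[simp]
lemma reseed_apply_self {n : ℕ} (σ : Seed n) (j : Fin (Nat.log 2 n)) (a v : Fin (n + 1)) :
    reseed σ j a v j a = v := by
  simp [reseed]

lemma reseed_apply_of_ne {n : ℕ} (σ : Seed n) {j j' : Fin (Nat.log 2 n)} {a a' v : Fin (n + 1)}
    (h : ¬ (j' = j ∧ a' = a)) : reseed σ j a v j' a' = σ j' a' := by
  unfold reseed
  by_cases hj : j' = j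
  · subst hj
    rw [Function.update_self, Function.update_of_ne fun ha => h ⟨rfl, ha⟩]
  · rw [Function.update_of_ne hj]

lemma reseed_mem_seedSpace {n : ℕ} {σ : Seed n} (hσ : σ ∈ seedSpace n)
    (j : Fin (Nat.log 2 n)) (a : Fin (n + 1)) {v : Fin (n + 1)}
    (hv : 1 ≤ (v : ℕ) ∧ (v : ℕ) ≤ Lsz n ((j : ℕ) + 1)) :
    reseed σ j a v ∈ seedSpace n := by
  simp only [seedSpace, Finset.mem_filter, Finset.mem_univ, true_and] at hσ ⊢
  intro j' a'
  by_cases h : j' = j ∧ a' = a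
  · obtain ⟨rfl, rfl⟩ := h
    simpa using hv
  · rw [reseed_apply_of_ne σ h]
    exact hσ j' a'

lemma eq_of_reseed_eq {n : ℕ} {σ τ : Seed n} {j : Fin (Nat.log 2 n)} {a v w : Fin (n + 1)}
    (h : reseed σ j a v = reseed τ j a w) (hja : σ j a = τ j a) : σ = τ := by
  funext j' a'
  by_cases hj : j' = j ∧ a' = a
  · obtain ⟨rfl, rfl⟩ := hj
    exact hja
  · rw [← reseed_apply_of_ne σ (v := v) hj, ← reseed_apply_of_ne τ (v := w) hj, h]

lemma leftEnd_reseed {n l : ℕ} (σ : Seed n) (hl : l < Nat.log 2 n) (a v : Fin (n + 1))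
    (y : ℕ) : leftEnd n (reseed σ ⟨l, hl⟩ a v) l y = leftEnd n σ l y :=
  leftEnd_congr (l := l) (fun _ hj => Function.update_of_ne (Fin.ne_of_val_ne hj.ne) _ _) y

lemma eq_of_add_mod_eq {A L s t : ℕ} (hs : 1 ≤ s ∧ s ≤ L) (ht : 1 ≤ t ∧ t ≤ L)
    (h : (A + s) % L = (A + t) % L) : s = t := by
  obtain ⟨s, rfl⟩ := Nat.exists_eq_add_of_le' hs.1
  obtain ⟨t, rfl⟩ := Nat.exists_eq_add_of_le' ht.1
  have hst : s ≡ t [MOD L] := (Nat.ModEq.add_left_cancel' A h).add_right_cancel' 1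
  rw [hst.eq_of_lt_of_lt (by omega) (by omega)]

lemma shift_eq_of_mem_firstSeparating {n l y z : ℕ} {σ τ : Seed n} (hl : l < Nat.log 2 n)
    (hyz : y ≤ z) (hσ : σ ∈ firstSeparating n l y z) (hτ : τ ∈ firstSeparating n l y z)
    (hleft : leftEnd n σ l y = leftEnd n τ l y)
    (hbdry : leftEnd n σ (l + 1) z = leftEnd n τ (l + 1) z) :
    σ ⟨l, hl⟩ (leftEndFin n τ l y) = τ ⟨l, hl⟩ (leftEndFin n τ l y) := by
  have hσmod := (leftEnd_succ_of_mem_firstSeparating hl hyz hσ).2.2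
  have hτmod := (leftEnd_succ_of_mem_firstSeparating hl hyz hτ).2.2
  rw [hleft, leftEndFin_congr hleft, hbdry] at hσmod
  have hrange : ∀ ρ ∈ firstSeparating n l y z,
      1 ≤ (ρ ⟨l, hl⟩ (leftEndFin n τ l y) : ℕ) ∧
        (ρ ⟨l, hl⟩ (leftEndFin n τ l y) : ℕ) ≤ Lsz n (l + 1) :=
    fun ρ hρ => (Finset.mem_filter.mp (Finset.mem_filter.mp hρ).1).2 _ _
  exact Fin.ext <| eq_of_add_mod_eq (hrange σ hσ) (hrange τ hτ) (hσmod.symm.trans hτmod)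

/-- Double counting: replacing the level-`l` shift at the group of `y` by `r ∈ [1, L]` and
recording the boundary `b ∈ (y, z]` that separates `y` from `z` is injective on
`firstSeparating × [1, L]`, since `b` recovers the old shift modulo `L`. -/
lemma card_firstSeparating_mul_le {n l y z : ℕ} (hyz : y ≤ z) :
    (firstSeparating n l y z).card * Lsz n (l + 1) ≤ (z - y) * (seedSpace n).card := by
  rcases lt_or_ge l (Nat.log 2 n) with hl | hl
  swap
  · have hempty : firstSeparating n l y z = ∅ :=
      Finset.filter_false_of_mem fun σ _ => by simp [leftEnd_succ_of_le σ hl]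
    simp [hempty]
  set L := Lsz n (l + 1)
  have hLn : L < n + 1 :=
    Nat.lt_succ_of_le <| (Nat.pow_le_pow_right two_pos (Nat.div_le_self _ _)).trans
      (Nat.pow_log_le_self 2 fun h => by simp [h] at hl)
  let lvl : Fin (Nat.log 2 n) := ⟨l, hl⟩
  let f : Seed n × ℕ → Seed n × ℕ := fun p =>
    (reseed p.1 lvl (leftEndFin n p.1 l y) (Fin.ofNat (n + 1) p.2), leftEnd n p.1 (l + 1) z)
  have hcard : (firstSeparating n l y z ×ˢ Finset.Icc 1 L).card ≤
      (seedSpace n ×ˢ Finset.Ioc y z).card := by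
    refine Finset.card_le_card_of_injOn f ?_ ?_
    · rintro ⟨σ, r⟩ hp
      simp only [Finset.coe_product, Set.mem_prod, Finset.mem_coe, Finset.mem_Icc] at hp ⊢
      obtain ⟨hb₁, hb₂, -⟩ := leftEnd_succ_of_mem_firstSeparating hl hyz hp.1
      refine ⟨reseed_mem_seedSpace (Finset.mem_filter.mp hp.1).1 _ _ ?_,
        Finset.mem_Ioc.mpr ⟨hb₁, hb₂⟩⟩
      rw [Fin.val_ofNat, Nat.mod_eq_of_lt (by omega)]
      exact hp.2
    · rintro ⟨σ, r⟩ hp ⟨τ, r'⟩ hp' hf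
      simp only [Finset.coe_product, Set.mem_prod, Finset.mem_coe, Finset.mem_Icc] at hp hp'
      simp only [f, Prod.mk.injEq] at hf
      obtain ⟨hreseed, hbdry⟩ := hf
      have hleft : leftEnd n σ l y = leftEnd n τ l y := by
        rw [← leftEnd_reseed σ hl _ (Fin.ofNat (n + 1) r),
          ← leftEnd_reseed τ hl _ (Fin.ofNat (n + 1) r')]
        exact congrArg (fun ρ => leftEnd n ρ l y) hreseed
      rw [leftEndFin_congr hleft] at hreseed
      have hshift := shift_eq_of_mem_firstSeparating hl hyz hp.1 hp'.1 hleft hbdry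
      have hr := congrFun (congrFun hreseed lvl) (leftEndFin n τ l y)
      simp only [reseed_apply_self] at hr
      refine Prod.ext (eq_of_reseed_eq hreseed hshift) ?_
      have hr' := congrArg Fin.val hr
      rwa [Fin.val_ofNat, Fin.val_ofNat, Nat.mod_eq_of_lt (by omega),
        Nat.mod_eq_of_lt (by omega)] at hr'
  simpa [Finset.card_product, mul_comm] using hcard

lemma sum_inv_le_two_div {f : ℕ → ℝ} {i : ℕ} (hpos : ∀ l, 0 < f l)
    (hf : ∀ l < i, 2 * f (l + 1) ≤ f l) :
    ∑ l ∈ Finset.range i, (f (l + 1))⁻¹ ≤ 2 / f i := by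
  induction i with
  | zero =>
    rw [Finset.sum_range_zero]
    exact (div_pos two_pos (hpos 0)).le
  | succ i ih =>
    have hstep : 2 / f i ≤ (f (i + 1))⁻¹ := by
      rw [div_le_iff₀ (hpos i), inv_mul_eq_div, le_div_iff₀ (hpos _)]
      exact hf i (Nat.lt_succ_self i)
    calc ∑ l ∈ Finset.range (i + 1), (f (l + 1))⁻¹
        ≤ 2 / f i + (f (i + 1))⁻¹ := by
          rw [Finset.sum_range_succ]
          linarith [ih fun l hl => hf l (Nat.lt_succ_of_lt hl)]
      _ ≤ 2 / f (i + 1) := by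
          rw [div_eq_mul_inv _ (f (i + 1))]
          linarith

lemma card_separating_le {n i y z : ℕ} (hyz : y ≤ z) (hi : 1 ≤ Nat.log 2 n / 2 ^ i) :
    ((separating n i y z).card : ℝ) ≤
      ((z - y : ℕ) : ℝ) * (seedSpace n).card * (2 / Lsz n i) := by
  have hLpos : ∀ l, (0 : ℝ) < Lsz n l := fun l => by exact_mod_cast Lsz_pos n l
  have hhalf : ∀ l < i, 2 * (Lsz n (l + 1) : ℝ) ≤ Lsz n l := fun l hl => by
    exact_mod_cast two_mul_Lsz_succ_le <| hi.trans <|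
      Nat.div_le_div_left (Nat.pow_le_pow_right two_pos hl) (Nat.two_pow_pos _)
  have hfirst : ∀ l, ((firstSeparating n l y z).card : ℝ) ≤
      ((z - y : ℕ) : ℝ) * (seedSpace n).card * (Lsz n (l + 1) : ℝ)⁻¹ := fun l => by
    rw [← div_eq_mul_inv, le_div_iff₀ (hLpos _)]
    exact_mod_cast card_firstSeparating_mul_le hyz
  calc ((separating n i y z).card : ℝ)
      ≤ ∑ l ∈ Finset.range i, ((firstSeparating n l y z).card : ℝ) := by
        exact_mod_cast card_separating_le_sum n i y z
    _ ≤ ∑ l ∈ Finset.range i,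
          ((z - y : ℕ) : ℝ) * (seedSpace n).card * (Lsz n (l + 1) : ℝ)⁻¹ :=
        Finset.sum_le_sum fun l _ => hfirst l
    _ ≤ ((z - y : ℕ) : ℝ) * (seedSpace n).card * (2 / Lsz n i) := by
        rw [← Finset.mul_sum]
        exact mul_le_mul_of_nonneg_left (sum_inv_le_two_div hLpos hhalf) (by positivity)

lemma separating_comm (n i y z : ℕ) : separating n i y z = separating n i z y := by
  simp only [separating, ne_comm]

lemma card_separating_div_le {n i : ℕ} (y z : ℕ) (hi : 1 ≤ Nat.log 2 n / 2 ^ i) :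
    ((separating n i y z).card : ℝ) / (seedSpace n).card ≤
      2 * ((max y z - min y z : ℕ) : ℝ) / Lsz n i := by
  wlog hyz : y ≤ z generalizing y z
  · simpa only [separating_comm, max_comm, min_comm] using this z y (le_of_not_ge hyz)
  refine div_le_of_le_mul₀ (by positivity) (by positivity) ?_
  rw [max_eq_right hyz, min_eq_left hyz]
  exact (card_separating_le hyz hi).trans_eq (by ring)

lemma rpow_one_div_two_pow_eq {x : ℝ} (hx : 0 < x) (p : ℕ) :
    x ^ ((1 : ℝ) / 2 ^ p) = 2 ^ (Real.logb 2 x / 2 ^ p) := by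
  conv_lhs => rw [← Real.rpow_logb two_pos (by norm_num) hx]
  rw [← Real.rpow_mul zero_le_two, mul_one_div]

lemma logb_lt_natLog_add_one (n : ℕ) : Real.logb 2 n < Nat.log 2 n + 1 := by
  have hfloor := Real.natFloor_logb_natCast 2 n
  push_cast at hfloor
  exact hfloor ▸ Nat.lt_floor_add_one _

lemma two_lt_of_two_rpow_div_lt {b : ℝ} (hb : 0 < b)
    (h : (2 : ℝ) ^ (b / 2) / (b / 2) < 2 ^ b / b) : 2 < b := by
  have hsq : (2 : ℝ) ^ b = 2 ^ (b / 2) * 2 ^ (b / 2) := by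
    rw [← Real.rpow_add two_pos, add_halves]
  have hpos : (0 : ℝ) < 2 ^ (b / 2) := Real.rpow_pos_of_pos two_pos _
  rw [hsq, div_lt_div_iff₀ (half_pos hb) hb] at h
  have h2 : (2 : ℝ) ^ (1 : ℝ) < 2 ^ (b / 2) := by
    rw [Real.rpow_one]
    refine lt_of_mul_lt_mul_left ((mul_lt_mul_iff_right₀ hpos).mp ?_) hb.le
    linarith
  linarith [(Real.rpow_lt_rpow_left_iff one_lt_two).mp h2]

lemma two_rpow_div_le_of_le {L : ℝ} {i j : ℕ} (hij : i ≤ j) (hL : 1 ≤ L / 2 ^ j) :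
    (2 : ℝ) ^ (L / 2 ^ j) / (L / 2 ^ j) ≤ 2 ^ (L / 2 ^ i) / (L / 2 ^ i) := by
  have hscale : L / 2 ^ i = 2 ^ (j - i) * (L / 2 ^ j) := by
    rw [← pow_sub_mul_pow (2 : ℝ) hij]
    field_simp
  set b := L / 2 ^ j
  have hr : ((j - i : ℕ) : ℝ) + 1 ≤ 2 ^ (j - i) := by
    simpa [add_comm, one_add_one_eq_two] using
      one_add_mul_le_pow (a := (1 : ℝ)) (by norm_num) (j - i)
  have hexp : b + (j - i : ℕ) ≤ 2 ^ (j - i) * b := by nlinarith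
  rw [hscale, div_le_div_iff₀ (by positivity) (by positivity)]
  calc (2 : ℝ) ^ b * (2 ^ (j - i) * b) = 2 ^ (b + (j - i : ℕ)) * b := by
        rw [Real.rpow_add two_pos, Real.rpow_natCast]
        ring
    _ ≤ 2 ^ (2 ^ (j - i) * b) * b := by
        gcongr
        exact one_le_two

lemma one_le_natLog_div_of_le {n i : ℕ} (h : (2 : ℝ) ^ i ≤ Real.logb 2 n) :
    1 ≤ Nat.log 2 n / 2 ^ i := by
  have hfloor := Real.natFloor_logb_natCast 2 n
  push_cast at hfloor
  rw [Nat.one_le_div_iff (Nat.two_pow_pos i), ← hfloor]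
  exact Nat.le_floor (by exact_mod_cast h)

lemma two_rpow_logb_div_le_two_mul_Lsz (n i : ℕ) :
    (2 : ℝ) ^ (Real.logb 2 n / 2 ^ i) ≤ 2 * Lsz n i := by
  have hexp : Real.logb 2 n / 2 ^ i ≤ ((Nat.log 2 n / 2 ^ i : ℕ) : ℝ) + 1 := by
    rw [div_le_iff₀ (by positivity)]
    have hK : Nat.log 2 n + 1 ≤ 2 ^ i * (Nat.log 2 n / 2 ^ i + 1) :=
      Nat.lt_mul_div_succ _ (Nat.two_pow_pos i)
    have hK' : (Nat.log 2 n : ℝ) + 1 ≤ 2 ^ i * ((Nat.log 2 n / 2 ^ i : ℕ) + 1) := by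
      exact_mod_cast hK
    linarith [logb_lt_natLog_add_one n]
  calc (2 : ℝ) ^ (Real.logb 2 n / 2 ^ i)
      ≤ 2 ^ (((Nat.log 2 n / 2 ^ i : ℕ) : ℝ) + 1) :=
        Real.rpow_le_rpow_of_exponent_le one_le_two hexp
    _ = 2 * Lsz n i := by
        rw [Real.rpow_add_one two_ne_zero, Real.rpow_natCast, Lsz]
        push_cast
        ring

/-- There are universal constants `c, C ≥ 1` such that for the randomized
group access tree over `[n]` (`n ≥ 4`): for every access sequence `X ∈ [n]^m`, time `t ≥ 2`,
window size `k ≥ 1`, and every minimizer `t'` realizing `UB^k(t)`, if `j` is the largest integer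
with `UB^k(t) ≤ c · n^{1/2^j} / log₂(n^{1/2^j})`, then for every `i ∈ {0, …, j}` the probability
over the random shifts that `x t` and `ub^k(t) = x t'` lie in different level-`i` groups is at
most `C / log₂(n^{1/2^i})`. -/
theorem stmt13 :
    ∃ c C : ℝ, 1 ≤ c ∧ 1 ≤ C ∧
      ∀ (n : ℕ), 4 ≤ n →
        ∀ (m : ℕ) (x : Fin m → ℕ), (∀ s : Fin m, 1 ≤ x s ∧ x s ≤ n) →
          ∀ (t : Fin m), 1 ≤ (t : ℕ) → ∀ (k : ℕ), 1 ≤ k →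
            ∀ j : ℕ,
              ((ubkNat k x t : ℝ) ≤
                  c * (n : ℝ) ^ ((1 : ℝ) / 2 ^ j) /
                    Real.logb 2 ((n : ℝ) ^ ((1 : ℝ) / 2 ^ j))) →
              (¬ ((ubkNat k x t : ℝ) ≤
                  c * (n : ℝ) ^ ((1 : ℝ) / 2 ^ (j + 1)) /
                    Real.logb 2 ((n : ℝ) ^ ((1 : ℝ) / 2 ^ (j + 1))))) →
              ∀ t' : Fin m, t' < t → (t : ℕ) ≤ (t' : ℕ) + k →
                ((t : ℕ) - (t' : ℕ)) + (max (x t) (x t') - min (x t) (x t')) + 2 =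
                  ubkNat k x t →
                ∀ i : ℕ, i ≤ j →
                  (((seedSpace n).filter
                      (fun σ => leftEnd n σ i (x t) ≠ leftEnd n σ i (x t'))).card : ℝ) /
                      ((seedSpace n).card : ℝ)
                    ≤ C / Real.logb 2 ((n : ℝ) ^ ((1 : ℝ) / 2 ^ i)) := by
  refine ⟨1, 4, le_rfl, by norm_num, ?_⟩
  intro n hn m x hx t _ k _ j hj hj' t' _ _ ht' i hij
  have hn0 : (0 : ℝ) < n := Nat.cast_pos.mpr (by omega)
  have hL : 0 < Real.logb 2 n := Real.logb_pos one_lt_two (by exact_mod_cast (by omega : 1 < n))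
  simp only [one_mul, rpow_one_div_two_pow_eq hn0,
    Real.logb_rpow two_pos (by norm_num : (2 : ℝ) ≠ 1)] at hj hj' ⊢
  set L := Real.logb 2 (n : ℝ)
  have hdepth : 2 < L / 2 ^ j := by
    rw [pow_succ, ← div_div] at hj'
    exact two_lt_of_two_rpow_div_lt (by positivity) ((not_le.mp hj').trans_le hj)
  have hK : 1 ≤ Nat.log 2 n / 2 ^ i := by
    refine one_le_natLog_div_of_le ((pow_le_pow_right₀ one_le_two hij).trans ?_)
    rw [lt_div_iff₀ (by positivity)] at hdepth
    linarith
  have hdist : ((max (x t) (x t') - min (x t) (x t') : ℕ) : ℝ) ≤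
      2 ^ (L / 2 ^ i) / (L / 2 ^ i) := by
    have hle : max (x t) (x t') - min (x t) (x t') ≤ ubkNat k x t := by omega
    exact ((Nat.cast_le.mpr hle).trans hj).trans (two_rpow_div_le_of_le hij (by linarith))
  calc _ ≤ 2 * ((max (x t) (x t') - min (x t) (x t') : ℕ) : ℝ) / Lsz n i :=
        card_separating_div_le (x t) (x t') hK
    _ ≤ 2 * (2 * Lsz n i / (L / 2 ^ i)) / Lsz n i := by
        gcongr
        exact hdist.trans (by gcongr; exact two_rpow_logb_div_le_two_mul_Lsz n i)
    _ = 4 / (L / 2 ^ i) := by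
        have hLsz : (Lsz n i : ℝ) ≠ 0 := by exact_mod_cast (Lsz_pos n i).ne'
        field_simp
        norm_num
end

section
/- For every group access tree T over [n] and every access sequence X = (x_1,…,x_m) ∈ [n]^m, the point set produced by GGreedy on X — the union of X_p = {(x_t,t) : 1 ≤ t ≤ m} with all points added by GGreedy — is arborally satisfied. -/
open scoped Classical

/-- The left boundary key of the level-`j` group containing `a`. -/
def lb {n : ℕ} (T : GAT n) (j : ℕ) (a : Fin n) : Fin n :=
  (T.grp j a).min' ⟨a, T.mem_grp j a⟩

/-- The right boundary key of the level-`j` group containing `a`. -/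
def rb {n : ℕ} (T : GAT n) (j : ℕ) (a : Fin n) : Fin n :=
  (T.grp j a).max' ⟨a, T.mem_grp j a⟩

/-- The closed axis-parallel rectangle spanned by the points `p` and `q` (which lie on no common
horizontal or vertical line) contains no point of `P` other than `p` and `q`. -/
def EmptyRect {n : ℕ} (P : Finset (Fin n × ℕ)) (p q : Fin n × ℕ) : Prop :=
  p.1 ≠ q.1 ∧ p.2 ≠ q.2 ∧
    ∀ r ∈ P, r ≠ p → r ≠ q →
      ¬ (min p.1 q.1 ≤ r.1 ∧ r.1 ≤ max p.1 q.1 ∧ min p.2 q.2 ≤ r.2 ∧ r.2 ≤ max p.2 q.2)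

/-- One level of GGreedy's processing of the access `xt` at time `t`, at level `j`: first the
two boundary points of the accessed group `g_j(xt)` are added at y-coordinate `t`, and then,
for every level-`j` group inside the parent `g_{j-1}(xt)` that is unsatisfied — a previously
placed point at one of its boundary keys forms, with one of the points just added at the
boundary keys of `g_j(xt)`, an empty rectangle — the corresponding boundary point is added at
y-coordinate `t`. -/
noncomputable def levelStep {n : ℕ} (T : GAT n) (t : ℕ) (xt : Fin n) (j : ℕ)
    (P : Finset (Fin n × ℕ)) : Finset (Fin n × ℕ) :=
  let base := insert (lb T j xt, t) (insert (rb T j xt, t) P)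
  base ∪ (Finset.univ.filter (fun p : Fin n =>
      p ∈ T.grp (j - 1) xt ∧ (p = lb T j p ∨ p = rb T j p) ∧
      ∃ r ∈ base, r.1 = p ∧ r.2 < t ∧
        ∃ q : Fin n, (q = lb T j xt ∨ q = rb T j xt) ∧
          EmptyRect base r (q, t))).image (fun p => (p, t))

/-- GGreedy's point set after processing the access `xt` at time `t` through levels
`1, …, j`, starting from the point set `P` (the accessed point `(xt, t)` is added first). -/
noncomputable def afterLevel {n : ℕ} (T : GAT n) (t : ℕ) (xt : Fin n)
    (P : Finset (Fin n × ℕ)) (j : ℕ) : Finset (Fin n × ℕ) :=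
  (List.range j).foldl (fun acc i => levelStep T t xt (i + 1) acc) (insert (xt, t) P)

/-- GGreedy's processing of the access `xt` at time `t`: all levels `1, …, depth` in order. -/
noncomputable def timeStep {n : ℕ} (T : GAT n) (t : ℕ) (xt : Fin n)
    (P : Finset (Fin n × ℕ)) : Finset (Fin n × ℕ) :=
  afterLevel T t xt P T.depth

/-- GGreedy's point set after the first `t` accesses of the sequence `x`. -/
noncomputable def gg {n m : ℕ} (T : GAT n) (x : Fin m → Fin n) : ℕ → Finset (Fin n × ℕ)
  | 0 => ∅
  | t + 1 => if h : t < m then timeStep T t (x ⟨t, h⟩) (gg T x t) else gg T x t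

/-- The final point set produced by GGreedy on the access sequence `x`: it contains the
accessed points `(x t, t)` for all `t` together with all points added by GGreedy. -/
noncomputable def ggFinal {n m : ℕ} (T : GAT n) (x : Fin m → Fin n) : Finset (Fin n × ℕ) :=
  gg T x m

/-- A point set (keys × times) is arborally satisfied if every pair of points not on a common
horizontal or vertical line has a third point of the set in the closed rectangle it spans. -/
def ArbSat {n : ℕ} (P : Finset (Fin n × ℕ)) : Prop :=
  ∀ p ∈ P, ∀ q ∈ P, p.1 ≠ q.1 → p.2 ≠ q.2 →
    ∃ r ∈ P, r ≠ p ∧ r ≠ q ∧ min p.1 q.1 ≤ r.1 ∧ r.1 ≤ max p.1 q.1 ∧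
      min p.2 q.2 ≤ r.2 ∧ r.2 ≤ max p.2 q.2

/-!
Suppose the points `(a, s)` and `(c, u)`, `s < u`, of GGreedy's output span an empty rectangle;
mirroring the keys by `Fin.rev` we may assume `a < c`. Every point of the rectangle exists after
time step `u`, so only that step, which accesses `χ = x u`, has to be analysed. GGreedy keeps the
invariant `BoundaryClosed`: a key touched at time `s` that is not a boundary key of its level-`j`
group comes with both boundary keys of that group at time `s`.

The key `c` was touched at time `u` as `χ`, as a boundary key of a group on the search path of
`χ`, or as a boundary key of an unsatisfied group, paired with an older point `(c, s')` whose
rectangle is empty. If `c` is the right boundary key of a group that contains `a`, the invariant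
puts `(c, s)` into the rectangle. Otherwise take a level `i` with `a ∈ g_i(χ)` left of
`g_{i+1}(χ)`: the left boundary point of `g_{i+1}(χ)` at time `u` lies in the rectangle, or `a` is
a boundary key and GGreedy touches `(a, u)` unless some point already blocks it, or the invariant
provides `(right(g_{i+1}(a)), s)`. For an unsatisfied group such a point may instead fall into the
partner's rectangle, contradicting its emptiness.
-/

def IsBoundary {n : ℕ} (T : GAT n) (j : ℕ) (a : Fin n) : Prop :=
  a = lb T j a ∨ a = rb T j a

namespace GAT

variable {n : ℕ} (T : GAT n)

theorem lb_mem (j : ℕ) (a : Fin n) : lb T j a ∈ T.grp j a := Finset.min'_mem _ _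

theorem rb_mem (j : ℕ) (a : Fin n) : rb T j a ∈ T.grp j a := Finset.max'_mem _ _

theorem lb_le (j : ℕ) (a : Fin n) : lb T j a ≤ a := Finset.min'_le _ _ (T.mem_grp j a)

theorem le_rb (j : ℕ) (a : Fin n) : a ≤ rb T j a := Finset.le_max' _ _ (T.mem_grp j a)

theorem mem_grp_iff {j : ℕ} {a b : Fin n} :
    b ∈ T.grp j a ↔ lb T j a ≤ b ∧ b ≤ rb T j a := by
  refine ⟨fun hb => ⟨Finset.min'_le _ _ hb, Finset.le_max' _ _ hb⟩, fun hb => ?_⟩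
  obtain ⟨lo, hi, h⟩ := T.grp_interval j a
  have hl := T.lb_mem j a
  have hr := T.rb_mem j a
  rw [h, Finset.mem_Icc] at hl hr ⊢
  exact ⟨hl.1.trans hb.1, hb.2.trans hr.2⟩

theorem lb_eq_of_mem {j : ℕ} {a b : Fin n} (hb : b ∈ T.grp j a) : lb T j b = lb T j a := by
  simp only [lb, T.grp_eq j a b hb]

theorem rb_eq_of_mem {j : ℕ} {a b : Fin n} (hb : b ∈ T.grp j a) : rb T j b = rb T j a := by
  simp only [rb, T.grp_eq j a b hb]

theorem grp_antitone (a : Fin n) : Antitone (T.grp · a) :=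
  antitone_nat_of_succ_le fun i => T.grp_subset i a

theorem lb_mono (a : Fin n) : Monotone (lb T · a) := fun _ _ hij =>
  (T.mem_grp_iff.1 (T.grp_antitone a hij (T.lb_mem _ a))).1

theorem rb_antitone (a : Fin n) : Antitone (rb T · a) := fun _ _ hij =>
  (T.mem_grp_iff.1 (T.grp_antitone a hij (T.rb_mem _ a))).2

theorem isBoundary_lb (j : ℕ) (a : Fin n) : IsBoundary T j (lb T j a) :=
  Or.inl (T.lb_eq_of_mem (T.lb_mem j a)).symm

theorem isBoundary_rb (j : ℕ) (a : Fin n) : IsBoundary T j (rb T j a) :=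
  Or.inr (T.rb_eq_of_mem (T.rb_mem j a)).symm

theorem isBoundary_of_depth_le {j : ℕ} (hj : T.depth ≤ j) (a : Fin n) : IsBoundary T j a :=
  Or.inl (Finset.mem_singleton.1 (T.grp_leaf j a hj ▸ T.lb_mem j a)).symm

theorem lt_lb_of_not_mem {j : ℕ} {a b d : Fin n} (hb : b ∉ T.grp j a) (hd : d ∈ T.grp j a)
    (hbd : b ≤ d) : b < lb T j a :=
  lt_of_not_ge fun h => hb (T.mem_grp_iff.2 ⟨h, hbd.trans (T.mem_grp_iff.1 hd).2⟩)

theorem rb_lt_lb_of_not_mem {j : ℕ} {a b : Fin n} (hb : b ∉ T.grp j a) (hlt : b < lb T j a) :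
    rb T j b < lb T j a := by
  refine lt_of_not_ge fun h => hb ?_
  have hmem : lb T j a ∈ T.grp j b := T.mem_grp_iff.2 ⟨(T.lb_le j b).trans hlt.le, h⟩
  rw [← T.grp_eq j a _ (T.lb_mem j a), T.grp_eq j b _ hmem]
  exact T.mem_grp j b

theorem exists_separation {a b : Fin n} (hab : a ≠ b) :
    ∃ i < T.depth, a ∈ T.grp i b ∧ a ∉ T.grp (i + 1) b := by
  have hleaf : a ∉ T.grp T.depth b := by rwa [T.grp_leaf _ b le_rfl, Finset.mem_singleton]
  have hex : ∃ j, a ∉ T.grp j b := ⟨_, hleaf⟩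
  obtain ⟨i, hi⟩ : ∃ i, Nat.find hex = i + 1 := Nat.exists_eq_succ_of_ne_zero fun h =>
    (h ▸ Nat.find_spec hex) (T.grp_root b ▸ Finset.mem_univ a)
  have hdepth := Nat.find_min' hex hleaf
  exact ⟨i, by omega, not_not.1 (Nat.find_min hex (by omega)), hi ▸ Nat.find_spec hex⟩

end GAT

theorem IsBoundary.mono {n : ℕ} {T : GAT n} {i j : ℕ} {a : Fin n} (h : IsBoundary T i a)
    (hij : i ≤ j) : IsBoundary T j a := by
  rcases h with h | h
  · exact Or.inl (le_antisymm (h.le.trans (T.lb_mono a hij)) (T.lb_le j a))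
  · exact Or.inr (le_antisymm (T.le_rb j a) ((T.rb_antitone a hij).trans h.ge))

section EmptyRect

variable {n : ℕ} {P P' : Finset (Fin n × ℕ)} {p q : Fin n × ℕ}

/-- For corners `p ≤ q` in the product order, `p ≤ z ∧ z ≤ q` says that `z` lies in the closed
rectangle spanned by `p` and `q`. -/
theorem emptyRect_iff_of_le (hpq : p ≤ q) :
    EmptyRect P p q ↔
      p.1 ≠ q.1 ∧ p.2 ≠ q.2 ∧ ∀ z ∈ P, p ≤ z → z ≤ q → z = p ∨ z = q := by
  rw [EmptyRect, min_eq_left hpq.1, max_eq_right hpq.1, min_eq_left hpq.2, max_eq_right hpq.2]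
  simp only [Prod.le_def]
  refine and_congr_right' (and_congr_right' (forall₂_congr fun z _ => ?_))
  tauto

theorem EmptyRect.eq_or_eq (h : EmptyRect P p q) {z : Fin n × ℕ} (hz : z ∈ P) (hpz : p ≤ z)
    (hzq : z ≤ q) : z = p ∨ z = q :=
  ((emptyRect_iff_of_le (hpz.trans hzq)).1 h).2.2 z hz hpz hzq

theorem EmptyRect.mono (h : EmptyRect P' p q) (hP : P ⊆ P') : EmptyRect P p q :=
  ⟨h.1, h.2.1, fun r hr => h.2.2 r (hP hr)⟩

theorem EmptyRect.symm {P : Finset (Fin n × ℕ)} {p q : Fin n × ℕ} (h : EmptyRect P p q) :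
    EmptyRect P q p :=
  ⟨h.1.symm, h.2.1.symm, fun r hr hrq hrp hb =>
    h.2.2 r hr hrp hrq (by rwa [min_comm p.1, max_comm p.1, min_comm p.2, max_comm p.2])⟩

end EmptyRect

section LevelStep

variable {n : ℕ} (T : GAT n) (t : ℕ) (xt : Fin n)

def levelBase (j : ℕ) (P : Finset (Fin n × ℕ)) : Finset (Fin n × ℕ) :=
  insert (lb T j xt, t) (insert (rb T j xt, t) P)

def Unsatisfied (j : ℕ) (P : Finset (Fin n × ℕ)) (p : Fin n) : Prop :=
  p ∈ T.grp (j - 1) xt ∧ IsBoundary T j p ∧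
    ∃ r ∈ levelBase T t xt j P, r.1 = p ∧ r.2 < t ∧
      ∃ q : Fin n, (q = lb T j xt ∨ q = rb T j xt) ∧ EmptyRect (levelBase T t xt j P) r (q, t)

variable {T t xt}

theorem mem_levelStep {j : ℕ} {P : Finset (Fin n × ℕ)} {z : Fin n × ℕ} :
    z ∈ levelStep T t xt j P ↔
      z ∈ levelBase T t xt j P ∨ z.2 = t ∧ Unsatisfied T t xt j P z.1 := by
  unfold levelStep
  simp only [Finset.mem_union, Finset.mem_image, Finset.mem_filter, Finset.mem_univ, true_and]
  refine or_congr Iff.rfl ⟨?_, fun ⟨hz, hu⟩ => ⟨z.1, hu, Prod.ext rfl hz.symm⟩⟩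
  rintro ⟨p, hu, rfl⟩
  exact ⟨rfl, hu⟩

end LevelStep

section AfterLevel

variable {n : ℕ} {T : GAT n} {t : ℕ} {xt : Fin n} {P : Finset (Fin n × ℕ)}

theorem afterLevel_succ (j : ℕ) :
    afterLevel T t xt P (j + 1) = levelStep T t xt (j + 1) (afterLevel T t xt P j) := by
  simp only [afterLevel, List.range_succ, List.foldl_append]
  rfl

theorem subset_levelBase {j : ℕ} : P ⊆ levelBase T t xt j P := fun _ hz =>
  Finset.mem_insert_of_mem (Finset.mem_insert_of_mem hz)

theorem levelBase_subset_levelStep {j : ℕ} : levelBase T t xt j P ⊆ levelStep T t xt j P :=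
  fun _ hz => mem_levelStep.2 (Or.inl hz)

theorem afterLevel_mono : Monotone (afterLevel T t xt P) :=
  monotone_nat_of_le_succ fun j => by
    rw [afterLevel_succ]
    exact subset_levelBase.trans levelBase_subset_levelStep

theorem subset_afterLevel (j : ℕ) : P ⊆ afterLevel T t xt P j :=
  (Finset.subset_insert _ _).trans (afterLevel_mono (Nat.zero_le j))

theorem mem_afterLevel_self (j : ℕ) : (xt, t) ∈ afterLevel T t xt P j :=
  afterLevel_mono (Nat.zero_le j) (Finset.mem_insert_self _ _)

theorem levelBase_subset_afterLevel (i : ℕ) :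
    levelBase T t xt (i + 1) (afterLevel T t xt P i) ⊆ afterLevel T t xt P (i + 1) := by
  rw [afterLevel_succ]
  exact levelBase_subset_levelStep

theorem lb_mem_afterLevel (i : ℕ) : (lb T (i + 1) xt, t) ∈ afterLevel T t xt P (i + 1) :=
  levelBase_subset_afterLevel i (Finset.mem_insert_self _ _)

theorem rb_mem_afterLevel (i : ℕ) : (rb T (i + 1) xt, t) ∈ afterLevel T t xt P (i + 1) :=
  levelBase_subset_afterLevel i (Finset.mem_insert_of_mem (Finset.mem_insert_self _ _))

theorem mem_afterLevel_of_unsatisfied {i : ℕ} {p : Fin n}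
    (hp : Unsatisfied T t xt (i + 1) (afterLevel T t xt P i) p) :
    (p, t) ∈ afterLevel T t xt P (i + 1) := by
  rw [afterLevel_succ]
  exact mem_levelStep.2 (Or.inr ⟨rfl, hp⟩)

theorem mem_or_eq_of_mem_afterLevel {j : ℕ} {z : Fin n × ℕ}
    (hz : z ∈ afterLevel T t xt P j) :
    z ∈ P ∨ z.2 = t := by
  induction j with
  | zero =>
    rcases Finset.mem_insert.1 hz with rfl | hz
    exacts [Or.inr rfl, Or.inl hz]
  | succ j ih =>
    rw [afterLevel_succ, mem_levelStep] at hz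
    rcases hz with hz | ⟨hz, -⟩
    · rcases Finset.mem_insert.1 hz with rfl | hz
      · exact Or.inr rfl
      rcases Finset.mem_insert.1 hz with rfl | hz
      exacts [Or.inr rfl, ih hz]
    · exact Or.inr hz

theorem eq_or_of_mem_afterLevel (hP : ∀ z ∈ P, z.2 < t) {j : ℕ} {c : Fin n}
    (hc : (c, t) ∈ afterLevel T t xt P j) :
    c = xt ∨ ∃ i < j, c = lb T (i + 1) xt ∨ c = rb T (i + 1) xt ∨
      ((c, t) ∉ levelBase T t xt (i + 1) (afterLevel T t xt P i) ∧
        Unsatisfied T t xt (i + 1) (afterLevel T t xt P i) c) := by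
  induction j with
  | zero =>
    rcases Finset.mem_insert.1 hc with h | h
    exacts [Or.inl (congrArg Prod.fst h), absurd (hP _ h) (lt_irrefl t)]
  | succ j ih =>
    by_cases hold : (c, t) ∈ afterLevel T t xt P j
    · obtain h | ⟨i, hi, h⟩ := ih hold
      exacts [Or.inl h, Or.inr ⟨i, hi.trans (lt_add_one j), h⟩]
    refine Or.inr ⟨j, lt_add_one j, ?_⟩
    by_cases hb : (c, t) ∈ levelBase T t xt (j + 1) (afterLevel T t xt P j)
    · simp only [levelBase, Finset.mem_insert, Prod.mk.injEq, and_true, hold, or_false] at hb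
      exact hb.imp_right Or.inl
    · rw [afterLevel_succ, mem_levelStep] at hc
      exact Or.inr (Or.inr ⟨hb, (hc.resolve_left hb).2⟩)

end AfterLevel

def BoundaryClosed {n : ℕ} (T : GAT n) (P : Finset (Fin n × ℕ)) : Prop :=
  ∀ p s i, (p, s) ∈ P → ¬ IsBoundary T (i + 1) p →
    (lb T (i + 1) p, s) ∈ P ∧ (rb T (i + 1) p, s) ∈ P

section TimeStep

variable {n : ℕ} {T : GAT n} {t : ℕ} {xt : Fin n} {P : Finset (Fin n × ℕ)}

theorem exists_isBoundary_of_mem_afterLevel (hP : ∀ z ∈ P, z.2 < t) {j : ℕ} {c : Fin n}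
    (hc : (c, t) ∈ afterLevel T t xt P j) (hcx : c ≠ xt) :
    ∃ k, c ∈ T.grp k xt ∧ IsBoundary T (k + 1) c := by
  obtain hcx' | ⟨k, -, rfl | rfl | ⟨-, hu⟩⟩ := eq_or_of_mem_afterLevel hP hc
  · exact absurd hcx' hcx
  · exact ⟨k, T.grp_subset k xt (T.lb_mem _ xt), T.isBoundary_lb _ xt⟩
  · exact ⟨k, T.grp_subset k xt (T.rb_mem _ xt), T.isBoundary_rb _ xt⟩
  · exact ⟨k, hu.1, hu.2.1⟩

theorem boundaryClosed_timeStep (hP : ∀ z ∈ P, z.2 < t) (hB : BoundaryClosed T P) :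
    BoundaryClosed T (timeStep T t xt P) := by
  intro p s i hp hnb
  have hi : i + 1 ≤ T.depth :=
    le_of_not_ge fun h => hnb (T.isBoundary_of_depth_le (by omega) p)
  rcases mem_or_eq_of_mem_afterLevel hp with hp | rfl
  · exact (hB p s i hp hnb).imp (subset_afterLevel _ ·) (subset_afterLevel _ ·)
  suffices hpx : p ∈ T.grp (i + 1) xt by
    rw [T.lb_eq_of_mem hpx, T.rb_eq_of_mem hpx]
    exact ⟨afterLevel_mono hi (lb_mem_afterLevel i), afterLevel_mono hi (rb_mem_afterLevel i)⟩
  by_cases hpx : p = xt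
  · exact hpx ▸ T.mem_grp _ p
  obtain ⟨k, hk, hbk⟩ := exists_isBoundary_of_mem_afterLevel hP hp hpx
  by_cases hik : i + 1 ≤ k
  · exact T.grp_antitone xt hik hk
  · exact absurd (hbk.mono (by omega)) hnb

end TimeStep

section GGreedy

variable {n m : ℕ} (T : GAT n) (x : Fin m → Fin n)

theorem gg_succ_of_lt {t : ℕ} (ht : t < m) :
    gg T x (t + 1) = timeStep T t (x ⟨t, ht⟩) (gg T x t) :=
  dif_pos ht

theorem mem_gg_succ {t : ℕ} {z : Fin n × ℕ} (hz : z ∈ gg T x (t + 1)) :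
    z ∈ gg T x t ∨ z.2 = t := by
  rw [gg] at hz
  split_ifs at hz
  exacts [mem_or_eq_of_mem_afterLevel hz, Or.inl hz]

theorem gg_mono : Monotone (gg T x) :=
  monotone_nat_of_le_succ fun t => by
    rw [gg]
    split_ifs
    exacts [subset_afterLevel _, subset_rfl]

theorem lt_of_mem_gg {t : ℕ} {z : Fin n × ℕ} (hz : z ∈ gg T x t) : z.2 < t := by
  induction t with
  | zero => simp [gg] at hz
  | succ t ih =>
    rcases mem_gg_succ T x hz with hz | hz
    exacts [(ih hz).trans (lt_add_one t), hz ▸ lt_add_one t]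

theorem mem_gg_of_lt {t t' : ℕ} {z : Fin n × ℕ} (hz : z ∈ gg T x t') (hzt : z.2 < t) :
    z ∈ gg T x t := by
  induction t' with
  | zero => simp [gg] at hz
  | succ t' ih =>
    rcases mem_gg_succ T x hz with hz | rfl
    exacts [ih hz, gg_mono T x hzt hz]

theorem boundaryClosed_gg (t : ℕ) : BoundaryClosed T (gg T x t) := by
  induction t with
  | zero => intro p s i hp; simp [gg] at hp
  | succ t ih =>
    rw [gg]
    split_ifs
    exacts [boundaryClosed_timeStep (fun _ => lt_of_mem_gg T x) ih, ih]

end GGreedy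

section TimeStepRect

variable {n : ℕ} {T : GAT n} {t : ℕ} {xt : Fin n} {P : Finset (Fin n × ℕ)}
  {a c : Fin n} {s : ℕ}

theorem exists_mem_rect_of_lt_lb (hB : BoundaryClosed T P) (has : (a, s) ∈ P) (hst : s < t)
    {i : ℕ} (ha : a ∈ T.grp i xt) (haL : a < lb T (i + 1) xt) :
    ∃ z ∈ afterLevel T t xt P (i + 1),
      (z ∈ levelBase T t xt (i + 1) (afterLevel T t xt P i) ∨ z = (a, t)) ∧
      z ≠ (a, s) ∧ z ≠ (lb T (i + 1) xt, t) ∧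
      (a, s) ≤ z ∧ z ≤ (lb T (i + 1) xt, t) := by
  have hPbase : P ⊆ levelBase T t xt (i + 1) (afterLevel T t xt P i) :=
    (subset_afterLevel i).trans subset_levelBase
  by_cases hal : IsBoundary T (i + 1) a
  · by_cases hR : EmptyRect (levelBase T t xt (i + 1) (afterLevel T t xt P i)) (a, s)
        (lb T (i + 1) xt, t)
    · have hu : Unsatisfied T t xt (i + 1) (afterLevel T t xt P i) a :=
        ⟨ha, hal, (a, s), hPbase has, rfl, hst, _, Or.inl rfl, hR⟩
      exact ⟨(a, t), mem_afterLevel_of_unsatisfied hu, Or.inr rfl, by simp [hst.ne'],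
        by simp [haL.ne], ⟨le_rfl, hst.le⟩, ⟨haL.le, le_rfl⟩⟩
    · rw [emptyRect_iff_of_le ⟨haL.le, hst.le⟩] at hR
      push Not at hR
      obtain ⟨z, hz, haz, hzL, hza, hzL'⟩ := hR haL.ne hst.ne
      exact ⟨z, levelBase_subset_afterLevel i hz, Or.inl hz, hza, hzL', haz, hzL⟩
  · have hr := (hB a s i has hal).2
    have har : a < rb T (i + 1) a := (T.le_rb _ a).lt_of_ne fun h => hal (Or.inr h)
    have hrL : rb T (i + 1) a < lb T (i + 1) xt :=
      T.rb_lt_lb_of_not_mem (fun h => haL.not_ge (T.mem_grp_iff.1 h).1) haL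
    exact ⟨_, subset_afterLevel _ hr, Or.inl (hPbase hr), by simp [har.ne'], by simp [hst.ne],
      ⟨har.le, le_rfl⟩, ⟨hrL.le, hst.le⟩⟩

theorem not_emptyRect_of_lb_le (hB : BoundaryClosed T P) (has : (a, s) ∈ P) (hst : s < t)
    {i : ℕ} (hi : i < T.depth) (ha : a ∈ T.grp i xt) (haL : a < lb T (i + 1) xt)
    (hLc : lb T (i + 1) xt ≤ c) : ¬ EmptyRect (timeStep T t xt P) (a, s) (c, t) := by
  intro hE
  have hsub : afterLevel T t xt P (i + 1) ⊆ timeStep T t xt P := afterLevel_mono hi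
  rcases hLc.lt_or_eq with hLc | rfl
  · rcases hE.eq_or_eq (hsub (lb_mem_afterLevel i)) ⟨haL.le, hst.le⟩ ⟨hLc.le, le_rfl⟩
      with h | h
    exacts [hst.ne' (congrArg Prod.snd h), hLc.ne (congrArg Prod.fst h)]
  · obtain ⟨z, hz, -, hza, hzc, haz, hzc'⟩ := exists_mem_rect_of_lt_lb hB has hst ha haL
    exact (hE.eq_or_eq (hsub hz) haz hzc').elim hza hzc

theorem not_emptyRect_of_le_access (hB : BoundaryClosed T P) (has : (a, s) ∈ P) (hst : s < t)
    (hac : a < c) (hcx : c ≤ xt)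
    (hLc : ∀ i, a ∈ T.grp i xt → a ∉ T.grp (i + 1) xt → lb T (i + 1) xt ≤ c) :
    ¬ EmptyRect (timeStep T t xt P) (a, s) (c, t) := by
  obtain ⟨i, hi, ha, ha'⟩ := T.exists_separation (hac.trans_le hcx).ne
  exact not_emptyRect_of_lb_le hB has hst hi ha
    (T.lt_lb_of_not_mem ha' (T.mem_grp _ xt) (hac.le.trans hcx)) (hLc i ha ha')

theorem not_emptyRect_of_eq_rb (hB : BoundaryClosed T P) (has : (a, s) ∈ P) (hst : s < t)
    (hxa : xt < a) (hac : a < c) {k : ℕ} (hc : c = rb T (k + 1) xt) :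
    ¬ EmptyRect (timeStep T t xt P) (a, s) (c, t) := by
  intro hE
  have ha : a ∈ T.grp (k + 1) xt :=
    T.mem_grp_iff.2 ⟨(T.lb_le _ xt).trans hxa.le, hc ▸ hac.le⟩
  have hnb : ¬ IsBoundary T (k + 1) a := by
    rw [IsBoundary, T.lb_eq_of_mem ha, T.rb_eq_of_mem ha, ← hc]
    rintro (h | rfl)
    exacts [(T.lb_le _ xt).not_gt (h ▸ hxa), lt_irrefl a hac]
  have hcs : (c, s) ∈ P := by simpa only [T.rb_eq_of_mem ha, ← hc] using (hB a s k has hnb).2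
  rcases hE.eq_or_eq (subset_afterLevel _ hcs) ⟨hac.le, le_rfl⟩ ⟨le_rfl, hst.le⟩ with h | h
  exacts [hac.ne' (congrArg Prod.fst h), hst.ne (congrArg Prod.snd h)]

theorem exists_partner_of_unsatisfied (hE : EmptyRect (timeStep T t xt P) (a, s) (c, t))
    (has : (a, s) ∈ P) (hst : s < t) (hac : a < c) {k : ℕ} (hk : k < T.depth)
    (hu : Unsatisfied T t xt (k + 1) (afterLevel T t xt P k) c) :
    ∃ sc < s, ∃ B, (B = lb T (k + 1) xt ∨ B = rb T (k + 1) xt) ∧ c < B ∧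
      EmptyRect (levelBase T t xt (k + 1) (afterLevel T t xt P k)) (c, sc) (B, t) := by
  obtain ⟨-, -, ⟨c', sc⟩, hr, hc', hsct, B, hBx, hR⟩ := hu
  obtain rfl : c = c' := hc'.symm
  have hsub : levelBase T t xt (k + 1) (afterLevel T t xt P k) ⊆ timeStep T t xt P :=
    (levelBase_subset_afterLevel k).trans (afterLevel_mono hk)
  have hscs : sc < s := lt_of_not_ge fun h => by
    rcases hE.eq_or_eq (hsub hr) ⟨hac.le, h⟩ ⟨le_rfl, hsct.le⟩ with h | h
    exacts [hac.ne' (congrArg Prod.fst h), hsct.ne (congrArg Prod.snd h)]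
  have hcB : c ≠ B := hR.1
  refine ⟨sc, hscs, B, hBx, hcB.lt_or_gt.resolve_right fun hBc => ?_, hR⟩
  rcases le_or_gt B a with hBa | haB
  · exact hR.2.2 (a, s) (subset_levelBase (subset_afterLevel k has))
      (fun h => hac.ne (congrArg Prod.fst h)) (fun h => hst.ne (congrArg Prod.snd h))
      ⟨min_le_of_right_le hBa, le_max_of_le_left hac.le, min_le_of_left_le hscs.le,
        le_max_of_le_right hst.le⟩
  · have hBt : (B, t) ∈ timeStep T t xt P := by
      rcases hBx with rfl | rfl
      exacts [afterLevel_mono hk (lb_mem_afterLevel k), afterLevel_mono hk (rb_mem_afterLevel k)]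
    rcases hE.eq_or_eq hBt ⟨haB.le, hst.le⟩ ⟨hBc.le, le_rfl⟩ with h | h
    exacts [hst.ne' (congrArg Prod.snd h), hBc.ne (congrArg Prod.fst h)]

theorem not_emptyRect_of_unsatisfied (hB : BoundaryClosed T P) (has : (a, s) ∈ P) (hst : s < t)
    (hac : a < c) {k : ℕ} (hk : k < T.depth)
    (hcb : (c, t) ∉ levelBase T t xt (k + 1) (afterLevel T t xt P k))
    (hu : Unsatisfied T t xt (k + 1) (afterLevel T t xt P k) c) :
    ¬ EmptyRect (timeStep T t xt P) (a, s) (c, t) := by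
  intro hE
  obtain ⟨sc, hscs, B, hBx, hcB, hR⟩ := exists_partner_of_unsatisfied hE has hst hac hk hu
  have hBg : B ∈ T.grp (k + 1) xt := by
    rcases hBx with rfl | rfl
    exacts [T.lb_mem _ xt, T.rb_mem _ xt]
  have hLB : lb T (k + 1) xt ≤ B := (T.mem_grp_iff.1 hBg).1
  have hcg : c ∉ T.grp (k + 1) xt := fun hc => hcb <| by
    rcases hu.2.1 with h | h
    · rw [h, T.lb_eq_of_mem hc]
      exact Finset.mem_insert_self _ _
    · rw [h, T.rb_eq_of_mem hc]
      exact Finset.mem_insert_of_mem (Finset.mem_insert_self _ _)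
  have hcL : c < lb T (k + 1) xt := T.lt_lb_of_not_mem hcg hBg hcB.le
  have hax : a < xt := hac.trans (hcL.trans_le (T.lb_le _ xt))
  by_cases ha : a ∈ T.grp k xt
  · obtain ⟨z, hz, hzb, hza, hzL, haz, hzL'⟩ :=
      exists_mem_rect_of_lt_lb hB has hst ha (hac.trans hcL)
    -- `z` lies in the rectangle spanned by `(a, s), (c, t)` or in that of `(c, sc), (B, t)`
    rcases le_or_gt z.1 c with hzc | hcz
    · rcases hE.eq_or_eq (afterLevel_mono hk hz) haz ⟨hzc, hzL'.2⟩ with rfl | rfl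
      · exact hza rfl
      · rcases hzb with h | h
        exacts [hcb h, hac.ne' (congrArg Prod.fst h)]
    · have hzb : z ∈ levelBase T t xt (k + 1) (afterLevel T t xt P k) :=
        hzb.resolve_right fun h => (hac.trans hcz).ne' (congrArg Prod.fst h)
      rcases hR.eq_or_eq hzb ⟨hcz.le, hscs.le.trans haz.2⟩ ⟨hzL'.1.trans hLB, hzL'.2⟩
        with rfl | rfl
      · exact lt_irrefl c hcz
      · exact hzL (Prod.ext (le_antisymm hzL'.1 hLB) rfl)
  · obtain ⟨i, hi, hai, hai'⟩ := T.exists_separation hax.ne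
    have hik : i + 1 ≤ k := le_of_not_gt fun h => ha (T.grp_antitone xt (by omega) hai)
    exact not_emptyRect_of_lb_le hB has hst hi hai
      (T.lt_lb_of_not_mem hai' (T.mem_grp _ xt) hax.le)
      ((T.lb_mono xt hik).trans (T.mem_grp_iff.1 hu.1).1) hE

theorem timeStep_not_emptyRect (hP : ∀ z ∈ P, z.2 < t) (hB : BoundaryClosed T P)
    (has : (a, s) ∈ P) (hc : (c, t) ∈ timeStep T t xt P) (hac : a < c) :
    ¬ EmptyRect (timeStep T t xt P) (a, s) (c, t) := by
  intro hE
  have hst := hP _ has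
  obtain rfl | ⟨k, hk, rfl | hrb | ⟨hcb, hu⟩⟩ := eq_or_of_mem_afterLevel hP hc
  · exact not_emptyRect_of_le_access hB has hst hac le_rfl (fun i _ _ => T.lb_le _ _) hE
  · refine not_emptyRect_of_le_access hB has hst hac (T.lb_le _ _)
      (fun i ha _ => T.lb_mono xt ?_) hE
    by_contra h
    exact hac.not_ge (T.mem_grp_iff.1 (T.grp_antitone xt (by omega) ha)).1
  · rcases (hrb ▸ T.le_rb _ xt : xt ≤ c).lt_or_eq with hxc | rfl
    · refine not_emptyRect_of_eq_rb hB has hst (lt_of_not_ge fun hax => ?_) hac hrb hE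
      rcases hE.eq_or_eq (mem_afterLevel_self _) ⟨hax, hst.le⟩ ⟨hxc.le, le_rfl⟩ with h | h
      exacts [hst.ne' (congrArg Prod.snd h), hxc.ne (congrArg Prod.fst h)]
    · exact not_emptyRect_of_le_access hB has hst hac le_rfl (fun i _ _ => T.lb_le _ _) hE
  · exact not_emptyRect_of_unsatisfied hB has hst hac hk hcb hu hE

end TimeStepRect

namespace GAT

variable {n : ℕ} (T : GAT n)

def reflect : GAT n where
  depth := T.depth
  grp i a := (T.grp i a.rev).map Fin.revPerm.toEmbedding
  mem_grp i a := by simp [Finset.mem_map_equiv, T.mem_grp]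
  grp_root a := by simp [T.grp_root]
  grp_leaf i a h := by simp [T.grp_leaf i _ h]
  grp_eq i a b hb := by
    rw [Finset.mem_map_equiv] at hb
    simp only [Fin.revPerm_symm, Fin.revPerm_apply] at hb
    rw [T.grp_eq _ _ _ hb]
  grp_subset i a := Finset.map_subset_map.2 (T.grp_subset i _)
  grp_interval i a := by
    obtain ⟨lo, hi, h⟩ := T.grp_interval i a.rev
    exact ⟨hi.rev, lo.rev, by rw [h, Fin.map_revPerm_Icc]⟩

variable {T}

theorem mem_reflect_grp {i : ℕ} {a b : Fin n} :
    b ∈ T.reflect.grp i a ↔ b.rev ∈ T.grp i a.rev := by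
  simp [reflect, Finset.mem_map_equiv]

theorem lb_reflect (j : ℕ) (a : Fin n) : lb T.reflect j a = (rb T j a.rev).rev := by
  refine le_antisymm (Finset.min'_le _ _ (mem_reflect_grp.2 (by simpa using T.rb_mem j a.rev)))
    (Fin.rev_le_iff.2 (Finset.le_max' _ _ (mem_reflect_grp.1 (T.reflect.lb_mem j a))))

theorem rb_reflect (j : ℕ) (a : Fin n) : rb T.reflect j a = (lb T j a.rev).rev := by
  refine le_antisymm
    (Fin.le_rev_iff.2 (Finset.min'_le _ _ (mem_reflect_grp.1 (T.reflect.rb_mem j a))))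
    (Finset.le_max' _ _ (mem_reflect_grp.2 (by simpa using T.lb_mem j a.rev)))

theorem isBoundary_reflect {j : ℕ} {a : Fin n} :
    IsBoundary T.reflect j a ↔ IsBoundary T j a.rev := by
  rw [IsBoundary, IsBoundary, lb_reflect, rb_reflect, or_comm]
  simp only [eq_comm (a := a), Fin.rev_eq_iff, eq_comm (a := a.rev)]

end GAT

section Mirror

variable {n : ℕ}

def mirror (P : Finset (Fin n × ℕ)) : Finset (Fin n × ℕ) := P.image fun z => (z.1.rev, z.2)

theorem mem_mirror {P : Finset (Fin n × ℕ)} {z : Fin n × ℕ} :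
    z ∈ mirror P ↔ (z.1.rev, z.2) ∈ P := by
  refine ⟨?_, fun h => Finset.mem_image.2 ⟨_, h, by simp⟩⟩
  intro h
  obtain ⟨w, hw, rfl⟩ := Finset.mem_image.1 h
  simpa using hw

theorem emptyRect_mirror {P : Finset (Fin n × ℕ)} {a c : Fin n} {s u : ℕ} :
    EmptyRect (mirror P) (a.rev, s) (c.rev, u) ↔ EmptyRect P (a, s) (c, u) := by
  simp only [EmptyRect, mirror, Finset.forall_mem_image, ← Fin.rev_anti.map_max,
    ← Fin.rev_anti.map_min, Fin.rev_le_rev, ne_eq, Prod.ext_iff, Fin.rev_inj]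
  refine and_congr_right' (and_congr_right' (forall₂_congr fun z _ => ?_))
  tauto

theorem exists_mem_mirror {P : Finset (Fin n × ℕ)} {φ : Fin n × ℕ → Prop} :
    (∃ z ∈ mirror P, φ z) ↔ ∃ z ∈ P, φ (z.1.rev, z.2) :=
  Finset.exists_mem_image

variable {T : GAT n} {t : ℕ} {xt : Fin n}

theorem levelBase_reflect (j : ℕ) (P : Finset (Fin n × ℕ)) :
    levelBase T.reflect t xt.rev j (mirror P) = mirror (levelBase T t xt j P) := by
  ext z
  simp only [levelBase, mem_mirror, Finset.mem_insert, GAT.lb_reflect, GAT.rb_reflect, Fin.rev_rev,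
    Prod.ext_iff, ← Fin.rev_eq_iff]
  tauto

theorem unsatisfied_reflect {j : ℕ} {P : Finset (Fin n × ℕ)} {p : Fin n} :
    Unsatisfied T.reflect t xt.rev j (mirror P) p ↔ Unsatisfied T t xt j P p.rev := by
  simp only [Unsatisfied, levelBase_reflect, GAT.mem_reflect_grp, GAT.isBoundary_reflect,
    Fin.rev_rev, exists_mem_mirror, GAT.lb_reflect, GAT.rb_reflect]
  refine and_congr_right' (and_congr_right' (exists_congr fun z => and_congr_right' ?_))
  rw [Fin.rev_eq_iff, Fin.revPerm.exists_congr_left]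
  simp only [Fin.revPerm_symm, Fin.revPerm_apply, Fin.rev_inj, emptyRect_mirror, or_comm]

theorem levelStep_reflect (j : ℕ) (P : Finset (Fin n × ℕ)) :
    levelStep T.reflect t xt.rev j (mirror P) = mirror (levelStep T t xt j P) := by
  ext z
  rw [mem_levelStep, mem_mirror, mem_levelStep, levelBase_reflect, mem_mirror, unsatisfied_reflect]

theorem afterLevel_reflect (P : Finset (Fin n × ℕ)) (j : ℕ) :
    afterLevel T.reflect t xt.rev (mirror P) j = mirror (afterLevel T t xt P j) := by
  induction j with
  | zero => simp [afterLevel, mirror, Finset.image_insert]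
  | succ j ih => rw [afterLevel_succ, afterLevel_succ, ih, levelStep_reflect]

theorem gg_reflect {m : ℕ} (x : Fin m → Fin n) (t : ℕ) :
    gg T.reflect (Fin.rev ∘ x) t = mirror (gg T x t) := by
  induction t with
  | zero => simp [gg, mirror]
  | succ t ih =>
    rw [gg, gg]
    split_ifs
    · rw [ih]
      exact afterLevel_reflect _ _
    · exact ih

end Mirror

section Final

variable {n m : ℕ}

theorem arbSat_of_forall_not_emptyRect {P : Finset (Fin n × ℕ)}
    (h : ∀ p ∈ P, ∀ q ∈ P, ¬ EmptyRect P p q) : ArbSat P := by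
  intro p hp q hq h1 h2
  by_contra hne
  exact h p hp q hq ⟨h1, h2, fun r hr hrp hrq hr' => hne ⟨r, hr, hrp, hrq, hr'⟩⟩

theorem ggFinal_not_emptyRect (T : GAT n) (x : Fin m → Fin n) {p q : Fin n × ℕ}
    (hp : p ∈ ggFinal T x) (hq : q ∈ ggFinal T x) (h2 : p.2 < q.2) (h1 : p.1 < q.1) :
    ¬ EmptyRect (ggFinal T x) p q := by
  intro hE
  have hu : q.2 < m := lt_of_mem_gg T x hq
  have hstep : gg T x (q.2 + 1) = timeStep T q.2 (x ⟨q.2, hu⟩) (gg T x q.2) :=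
    gg_succ_of_lt T x hu
  refine timeStep_not_emptyRect (fun _ => lt_of_mem_gg T x) (boundaryClosed_gg T x q.2)
    (mem_gg_of_lt T x hp h2) (hstep ▸ mem_gg_of_lt T x hq (lt_add_one q.2)) h1
    (hE.mono (hstep ▸ gg_mono T x hu))

end Final

/-- For every group access tree `T` over `[n]` and every access sequence
`X ∈ [n]^m`, the point set produced by GGreedy on `X` — the union of
`X_p = {(x_t, t)}` with all points added by GGreedy — is arborally satisfied. -/
theorem stmt15 (n m : ℕ) (T : GAT n) (x : Fin m → Fin n) :
    ArbSat (ggFinal T x) := by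
  refine arbSat_of_forall_not_emptyRect fun p hp q hq hE => ?_
  wlog h2 : p.2 < q.2 generalizing p q
  · exact this q hq p hp hE.symm (lt_of_le_of_ne (not_lt.1 h2) hE.2.1.symm)
  wlog h1 : p.1 < q.1 generalizing T x p q
  · have hmirror : ggFinal T.reflect (Fin.rev ∘ x) = mirror (ggFinal T x) := gg_reflect x m
    refine this T.reflect (Fin.rev ∘ x) (p.1.rev, p.2) (by simpa [hmirror, mem_mirror])
      (q.1.rev, q.2) (by simpa [hmirror, mem_mirror]) ?_ h2
      (Fin.rev_lt_rev.2 (lt_of_le_of_ne (not_lt.1 h1) hE.1.symm))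
    rw [hmirror, emptyRect_mirror]
    exact hE
  exact ggFinal_not_emptyRect T x hp hq h2 h1 hE
end
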